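/- arXiv:1706.08330 — 3 statements merged into one kernel-verified Lean document; each statement's English description precedes it below -/
import Mathlib

section
/- Let G be a graph with an end ω of vertex degree k. Two ω-relevant separations (A,B) and (C,D) are nested if and only if they are comparable with respect to the partial order ≤ (where (A,B) ≤ (C,D) iff A ⊆ C and D ⊆ B), or A ⊆ D. -/
open Set Cardinal

namespace PaperEnds

/-- A ray in `G`: a one-sided infinite path, i.e. an injective sequence of
pairwise adjacent consecutive vertices. -/
def IsRay {V : Type} (G : SimpleGraph V) (r : ℕ → V) : Prop :=
  Function.Injective r ∧ ∀ n, G.Adj (r n) (r (n + 1))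

/-- `a` and `b` are connected by a walk avoiding the vertex set `S`. -/
def ReachableOutside {V : Type} (G : SimpleGraph V) (S : Set V) (a b : V) : Prop :=
  ∃ w : G.Walk a b, ∀ v ∈ w.support, v ∉ S

/-- Two rays are equivalent (belong to the same end) if for every finite vertex
set `S` they have tails lying in the same component of `G − S`. -/
def RayEquiv {V : Type} (G : SimpleGraph V) (r₁ r₂ : ℕ → V) : Prop :=
  ∀ S : Set V, S.Finite → ∃ m n : ℕ,
    (∀ i, m ≤ i → r₁ i ∉ S) ∧ (∀ j, n ≤ j → r₂ j ∉ S) ∧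
    ReachableOutside G S (r₁ m) (r₂ n)

/-- `r` is a ray belonging to the end represented by the ray `ω`. -/
def InEnd {V : Type} (G : SimpleGraph V) (ω r : ℕ → V) : Prop :=
  IsRay G r ∧ RayEquiv G r ω

/-- `G` has exactly one end: it has a ray and any two rays are equivalent. -/
def OneEnded {V : Type} (G : SimpleGraph V) : Prop :=
  (∃ r, IsRay G r) ∧ ∀ r₁ r₂, IsRay G r₁ → IsRay G r₂ → RayEquiv G r₁ r₂

/-- A family of pairwise (vertex-)disjoint rays. -/
def DisjointRays {V : Type} {ι : Type} (f : ι → ℕ → V) : Prop :=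
  Pairwise fun i j => Disjoint (Set.range (f i)) (Set.range (f j))

/-- The end represented by `ω` has vertex degree `k`: the maximum cardinality of a
family of pairwise disjoint rays belonging to the end is `k`. -/
def EndVertexDegree {V : Type} (G : SimpleGraph V) (ω : ℕ → V) (k : ℕ) : Prop :=
  (∃ f : Fin k → ℕ → V, (∀ i, InEnd G ω (f i)) ∧ DisjointRays f) ∧
  ¬ ∃ f : Fin (k + 1) → ℕ → V, (∀ i, InEnd G ω (f i)) ∧ DisjointRays f

/-- `v` dominates the end represented by `ω`: for every ray `r` in the end there are
infinitely many `v`–`r` paths pairwise meeting only in `v`. -/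
def Dominates {V : Type} (G : SimpleGraph V) (v : V) (ω : ℕ → V) : Prop :=
  ∀ r : ℕ → V, InEnd G ω r →
    ∃ (t : ℕ → ℕ) (P : (n : ℕ) → G.Walk v (r (t n))),
      Function.Injective t ∧
      (∀ n, (P n).IsPath) ∧
      (∀ n, ∀ u ∈ (P n).support, u ∈ Set.range r → u = r (t n)) ∧
      (∀ m n, m ≠ n → ∀ u, u ∈ (P m).support → u ∈ (P n).support → u = v)

/-- The end represented by `ω` is undominated. -/
def Undominated {V : Type} (G : SimpleGraph V) (ω : ℕ → V) : Prop :=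
  ¬ ∃ v, Dominates G v ω

/-- `(A, B)` is a separation of `G`. -/
def IsSeparation {V : Type} (G : SimpleGraph V) (A B : Set V) : Prop :=
  A ∪ B = Set.univ ∧ ∀ a ∈ A \ B, ∀ b ∈ B \ A, ¬ G.Adj a b

/-- The order of a separation `(A, B)`, i.e. `|A ∩ B|` as an extended natural number. -/
noncomputable def SepOrder {V : Type} (A B : Set V) : ℕ∞ := (A ∩ B).encard

/-- The end represented by `ω` lies in the side `B`: every ray of the end has all
but finitely many vertices in `B`. -/
def LiesIn {V : Type} (G : SimpleGraph V) (ω : ℕ → V) (B : Set V) : Prop :=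
  ∀ r, InEnd G ω r → ∃ m, ∀ n, m ≤ n → r n ∈ B

/-- The vertex set `s` is connected in `G` (any two of its vertices are joined by a
walk inside `s`). -/
def ConnectedIn {V : Type} (G : SimpleGraph V) (s : Set V) : Prop :=
  ∀ a ∈ s, ∀ b ∈ s, ∃ w : G.Walk a b, ∀ v ∈ w.support, v ∈ s

/-- `(A, B)` is an ω-relevant separation (for the end of vertex degree `k`
represented by the ray `ω`). -/
def Relevant {V : Type} (G : SimpleGraph V) (ω : ℕ → V) (k : ℕ) (A B : Set V) : Prop :=
  IsSeparation G A B ∧ SepOrder A B = (k : ℕ∞) ∧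
  ConnectedIn G (A \ B) ∧
  (∀ v ∈ A ∩ B, ∃ u ∈ A \ B, G.Adj v u) ∧
  LiesIn G ω B ∧
  ¬ ∃ C D : Set V, IsSeparation G C D ∧ SepOrder C D < (k : ℕ∞) ∧ A ⊆ C ∧ LiesIn G ω D

/-- Two separations `(A, B)` and `(C, D)` are nested. -/
def Nested {V : Type} (A B C D : Set V) : Prop :=
  (A ⊆ C ∧ D ⊆ B) ∨ (A ⊆ D ∧ C ⊆ B) ∨ (B ⊆ C ∧ D ⊆ A) ∨ (B ⊆ D ∧ C ⊆ A)

/-! The four cases of nestedness reduce to the two claimed ones because `(B ⊆ C, D ⊆ A)` is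
impossible — a tail of `ω` would lie in the finite set `C ∩ D` — and because `A ⊆ D` already forces
`C ⊆ B`: a vertex of `C \ B` lies in `A ∩ C ∩ D`, so it has a neighbour in `C \ D ⊆ B \ A`,
an edge across the separation `(A, B)`. -/

section

variable {V : Type} {G : SimpleGraph V} {ω : ℕ → V}

lemma IsRay.inEnd_self (hω : IsRay G ω) : InEnd G ω ω := by
  refine ⟨hω, fun S hS => ?_⟩
  obtain ⟨m, hm⟩ := (hS.preimage hω.1.injOn).bddAbove
  have tail : ∀ i, m < i → ω i ∉ S := fun i hi hiS => (hm hiS).not_gt hi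
  exact ⟨m + 1, m + 1, fun i hi => tail i (by omega), fun i hi => tail i (by omega),
    .nil, by simpa using tail (m + 1) (by omega)⟩

lemma LiesIn.inter {B D : Set V} (hB : LiesIn G ω B) (hD : LiesIn G ω D) :
    LiesIn G ω (B ∩ D) := by
  intro r hr
  obtain ⟨m₁, hm₁⟩ := hB r hr
  obtain ⟨m₂, hm₂⟩ := hD r hr
  exact ⟨max m₁ m₂, fun n hn => ⟨hm₁ n (le_of_max_le_left hn), hm₂ n (le_of_max_le_right hn)⟩⟩

lemma LiesIn.infinite (hω : IsRay G ω) {B : Set V} (hB : LiesIn G ω B) : B.Infinite := by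
  obtain ⟨m, hm⟩ := hB ω hω.inEnd_self
  have htail : range (fun n => ω (m + n)) ⊆ B := by
    rintro _ ⟨n, rfl⟩
    exact hm _ (Nat.le_add_right m n)
  exact (infinite_range_of_injective (hω.1.comp (add_right_injective m))).mono htail

lemma not_subset_of_liesIn (hω : IsRay G ω) {B C D : Set V} (hB : LiesIn G ω B)
    (hD : LiesIn G ω D) (hCD : (C ∩ D).Finite) : ¬ B ⊆ C := fun hBC =>
  (hB.inter hD).infinite hω (hCD.subset (inter_subset_inter_left D hBC))

lemma IsSeparation.subset_of_subset_of_forall_adj {A B C D : Set V} (hAB : IsSeparation G A B)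
    (hAD : A ⊆ D) (hnbr : ∀ v ∈ C ∩ D, ∃ u ∈ C \ D, G.Adj v u) : C ⊆ B := by
  have mem_left : ∀ x, x ∉ B → x ∈ A := fun x hxB =>
    (mem_union x A B).1 (hAB.1 ▸ mem_univ x) |>.resolve_right hxB
  intro x hxC
  by_contra hxB
  have hxA := mem_left x hxB
  obtain ⟨u, ⟨-, huD⟩, hxu⟩ := hnbr x ⟨hxC, hAD hxA⟩
  have huA : u ∉ A := fun huA => huD (hAD huA)
  have huB : u ∈ B := by_contra fun huB => huA (mem_left u huB)
  exact hAB.2 x ⟨hxA, hxB⟩ u ⟨huB, huA⟩ hxu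

end

theorem relevant_nested_iff_general {V : Type} (G : SimpleGraph V) (ω : ℕ → V) (k : ℕ)
    (hω : IsRay G ω)
    (A B C D : Set V) (hAB : Relevant G ω k A B) (hCD : Relevant G ω k C D) :
    Nested A B C D ↔ ((A ⊆ C ∧ D ⊆ B) ∨ (C ⊆ A ∧ B ⊆ D) ∨ A ⊆ D) := by
  obtain ⟨hsepAB, -, -, -, hB, -⟩ := hAB
  obtain ⟨-, hordCD, -, hnbrCD, hD, -⟩ := hCD
  have hBC : ¬ B ⊆ C := not_subset_of_liesIn hω hB hD (finite_of_encard_eq_coe hordCD)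
  have hCB : A ⊆ D → C ⊆ B := fun hAD => hsepAB.subset_of_subset_of_forall_adj hAD hnbrCD
  unfold Nested
  tauto

/-- two ω-relevant separations are nested iff they are comparable with
respect to `≤` or `A ⊆ D`. -/
theorem relevant_nested_iff {V : Type} (G : SimpleGraph V) (ω : ℕ → V) (k : ℕ)
    (hω : IsRay G ω) (hdeg : EndVertexDegree G ω k)
    (A B C D : Set V) (hAB : Relevant G ω k A B) (hCD : Relevant G ω k C D) :
    Nested A B C D ↔ ((A ⊆ C ∧ D ⊆ B) ∨ (C ⊆ A ∧ B ⊆ D) ∨ A ⊆ D) :=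
  relevant_nested_iff_general G ω k hω A B C D hAB hCD

end PaperEnds
end

section
/- Let G be a graph with exactly one end ω, which is undominated and has vertex degree k. Then for every ω-relevant separation (C,D), for all but finitely many vertices v in C one has α(v) ≤ α(C,D). -/
open Set Cardinal

namespace PaperEnds

/-- `α` is the canonical rank function on the set of ω-relevant separations, ordered by
`(C,D) ≤ (A,B) ↔ C ⊆ A ∧ B ⊆ D`: the value `α (A,B)` is the least ordinal strictly
greater than `α (C,D)` for every ω-relevant `(C,D) < (A,B)`. -/
def AlphaSpec {V : Type} (G : SimpleGraph V) (ω : ℕ → V) (k : ℕ)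
    (α : Set V → Set V → Ordinal) : Prop :=
  ∀ A B : Set V, Relevant G ω k A B →
    IsLeast {β : Ordinal | ∀ C D : Set V, Relevant G ω k C D →
      C ⊆ A → B ⊆ D → (C, D) ≠ (A, B) → α C D < β} (α A B)

/-- `α(v)`: the supremum of `α (A,B)` over ω-relevant separations with `v ∈ A ∩ B`
(`0` if there is no such separation). -/
noncomputable def alphaV {V : Type} (G : SimpleGraph V) (ω : ℕ → V) (k : ℕ)
    (α : Set V → Set V → Ordinal) (v : V) : Ordinal :=
  sSup {o : Ordinal | ∃ A B : Set V, Relevant G ω k A B ∧ v ∈ A ∩ B ∧ o = α A B}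

/-!
Suppose infinitely many `v ∈ C` had `α(v) > α(C,D)`. Such a `v` lies in the separator of a
relevant `(A,B)` that is not below `(C,D)`, so the connected set `A \ B` reaches `D` and hence
contains a vertex of the finite separator `C ∩ D`; by pigeonhole one vertex `y` lies in `A \ B`
for infinitely many of these separations.

We then grow a finite set `W` contained in infinitely many of their separators, which must
stop before `|W| = k`. Take `k` disjoint rays of the end. If each ray enters the `B`-sides at
positions tending to infinity, one separator contains an entry vertex of every ray inside `D`
besides its own vertex `v ∉ D`: that is `k + 1` vertices. Otherwise one ray lies in infinitely
many `B`-sides from a fixed position `M` on. The component of `y` in `G - W` meets every ray of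
the end infinitely often, for otherwise it would yield a separation of order `|W| < k` above a
relevant one; so a path from `y` to that ray beyond `M` avoids `W` and crosses all those
separators, and one of its finitely many vertices lies in infinitely many of them.
-/

lemma _root_.Set.Infinite.exists_infinite_of_forall_exists {α ι : Type*} {T : Set α}
    (hT : T.Infinite) {S : Set ι} (hS : S.Finite) {P : α → ι → Prop}
    (h : ∀ v ∈ T, ∃ i ∈ S, P v i) : ∃ i ∈ S, {v ∈ T | P v i}.Infinite := by
  by_contra! hfin
  refine hT ((hS.biUnion fun i hi => hfin i hi).subset fun v hv => ?_)
  obtain ⟨i, hi, hP⟩ := h v hv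
  exact mem_biUnion hi ⟨hv, hP⟩

section Graph

open Filter

variable {V : Type} {G : SimpleGraph V}

namespace IsSeparation

variable {A B : Set V}

lemma mem_left (h : IsSeparation G A B) {z : V} (hz : z ∉ B) : z ∈ A :=
  (h.1 ▸ mem_univ z : z ∈ A ∪ B).resolve_right hz

lemma mem_right (h : IsSeparation G A B) {z : V} (hz : z ∉ A) : z ∈ B :=
  (h.1 ▸ mem_univ z : z ∈ A ∪ B).resolve_left hz

lemma mem_left_of_adj (h : IsSeparation G A B) {a b : V} (ha : a ∈ A \ B) (hab : G.Adj a b) :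
    b ∈ A := by
  by_contra hb
  exact h.2 a ha b ⟨h.mem_right hb, hb⟩ hab

lemma exists_mem_inter_of_walk (h : IsSeparation G A B) {a b : V} (w : G.Walk a b)
    (ha : a ∈ A) (hb : b ∈ B) : ∃ x ∈ w.support, x ∈ A ∩ B := by
  induction w with
  | nil => exact ⟨_, List.mem_singleton_self _, ha, hb⟩
  | @cons a c _ hac p ih =>
    by_cases haB : a ∈ B
    · exact ⟨a, p.support.mem_cons_self, ha, haB⟩
    · obtain ⟨x, hx, hxAB⟩ := ih (h.mem_left_of_adj ⟨ha, haB⟩ hac) hb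
      exact ⟨x, List.mem_cons_of_mem _ hx, hxAB⟩

lemma exists_mem_inter_of_adj_seq (h : IsSeparation G A B) {g : ℕ → V}
    (hg : ∀ n, G.Adj (g n) (g (n + 1))) {t m : ℕ} (htm : t ≤ m) (ht : g t ∈ A) (hm : g m ∈ B) :
    ∃ n, t ≤ n ∧ g n ∈ A ∩ B := by
  induction m, htm using Nat.le_induction with
  | base => exact ⟨t, le_rfl, ht, hm⟩
  | succ m htm ih =>
    by_cases hmB : g m ∈ B
    · exact ih hmB
    · exact ⟨m + 1, htm.trans m.le_succ, h.mem_left_of_adj ⟨h.mem_left hmB, hmB⟩ (hg m), hm⟩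

lemma subset_and_subset_of_disjoint (hAB : IsSeparation G A B) {C D : Set V}
    (hCD : IsSeparation G C D) (hnb : ∀ x ∈ A ∩ B, ∃ u ∈ A \ B, G.Adj x u)
    (hdisj : Disjoint (A \ B) D) : A ⊆ C ∧ D ⊆ B := by
  have hdiff : A \ B ⊆ C := fun u hu => hCD.mem_left (disjoint_left.1 hdisj hu)
  refine ⟨fun z hz => ?_, fun d hd => ?_⟩
  · by_cases hzB : z ∈ B
    · obtain ⟨u, hu, hzu⟩ := hnb z ⟨hz, hzB⟩
      exact hCD.mem_left_of_adj ⟨hdiff hu, disjoint_left.1 hdisj hu⟩ hzu.symm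
    · exact hdiff ⟨hz, hzB⟩
  · by_contra hdB
    exact disjoint_left.1 hdisj ⟨hAB.mem_left hdB, hdB⟩ hd

end IsSeparation

namespace ReachableOutside

variable {S : Set V} {a b c : V}

lemma refl (ha : a ∉ S) : ReachableOutside G S a a :=
  ⟨.nil, by simpa using ha⟩

lemma symm (h : ReachableOutside G S a b) : ReachableOutside G S b a := by
  obtain ⟨w, hw⟩ := h
  exact ⟨w.reverse, fun v hv => hw v (by simpa using hv)⟩

lemma trans (h₁ : ReachableOutside G S a b) (h₂ : ReachableOutside G S b c) :
    ReachableOutside G S a c := by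
  obtain ⟨w₁, hw₁⟩ := h₁
  obtain ⟨w₂, hw₂⟩ := h₂
  exact ⟨w₁.append w₂, fun v hv =>
    ((w₁.mem_support_append_iff w₂).1 hv).elim (hw₁ v) (hw₂ v)⟩

lemma mono {S' : Set V} (hS : S' ⊆ S) (h : ReachableOutside G S a b) :
    ReachableOutside G S' a b := by
  obtain ⟨w, hw⟩ := h
  exact ⟨w, fun v hv hvS => hw v hv (hS hvS)⟩

lemma of_adj (hab : G.Adj a b) (ha : a ∉ S) (hb : b ∉ S) : ReachableOutside G S a b :=
  ⟨hab.toWalk, by simp [ha, hb]⟩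

lemma not_mem_right (h : ReachableOutside G S a b) : b ∉ S :=
  h.elim fun w hw => hw b w.end_mem_support

lemma step (h : ReachableOutside G S a b) (hbc : G.Adj b c) (hc : c ∉ S) :
    ReachableOutside G S a c :=
  h.trans (.of_adj hbc h.not_mem_right hc)

end ReachableOutside

lemma reachableOutside_of_tail {r : ℕ → V} (hr : ∀ n, G.Adj (r n) (r (n + 1))) {S : Set V}
    {m n : ℕ} (hmn : m ≤ n) (hS : ∀ j, m ≤ j → r j ∉ S) : ReachableOutside G S (r m) (r n) := by
  induction n, hmn using Nat.le_induction with
  | base => exact .refl (hS m le_rfl)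
  | succ n hmn ih =>
    exact ih.trans (.of_adj (hr n) (hS n hmn) (hS (n + 1) (hmn.trans n.le_succ)))

namespace RayEquiv

variable {r₁ r₂ r₃ : ℕ → V}

lemma symm (h : RayEquiv G r₁ r₂) : RayEquiv G r₂ r₁ := fun S hS => by
  obtain ⟨m, n, hm, hn, hmn⟩ := h S hS
  exact ⟨n, m, hn, hm, hmn.symm⟩

lemma trans (hr₂ : ∀ n, G.Adj (r₂ n) (r₂ (n + 1))) (h₁₂ : RayEquiv G r₁ r₂)
    (h₂₃ : RayEquiv G r₂ r₃) : RayEquiv G r₁ r₃ := fun S hS => by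
  obtain ⟨m₁, n₁, hm₁, hn₁, h₁⟩ := h₁₂ S hS
  obtain ⟨n₂, m₃, hn₂, hm₃, h₃⟩ := h₂₃ S hS
  have h₂ : ReachableOutside G S (r₂ n₁) (r₂ n₂) := by
    rcases le_total n₁ n₂ with h | h
    · exact reachableOutside_of_tail hr₂ h hn₁
    · exact (reachableOutside_of_tail hr₂ h hn₂).symm
  exact ⟨m₁, m₃, hm₁, hm₃, h₁.trans (h₂.trans h₃)⟩

lemma frequently_reachableOutside (h : RayEquiv G r₁ r₂)
    (hr₁ : ∀ n, G.Adj (r₁ n) (r₁ (n + 1))) {W : Set V} (hW : W.Finite) {y : V}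
    (hfreq : ∃ᶠ m in atTop, ReachableOutside G W y (r₁ m)) :
    ∃ᶠ m in atTop, ReachableOutside G W y (r₂ m) := by
  refine frequently_atTop.2 fun N => ?_
  -- cutting out `r₂ '' Iio N` forces the connection to reach `r₂` at or after `N`
  obtain ⟨m₁, n₂, hm₁, hn₂, hreach⟩ :=
    h (W ∪ r₂ '' Iio N) (hW.union ((finite_Iio N).image r₂))
  obtain ⟨m, hm₁m, hym⟩ := hfreq.forall_exists_of_atTop m₁
  refine ⟨n₂, not_lt.1 fun hlt => hn₂ n₂ le_rfl (Or.inr ⟨n₂, hlt, rfl⟩), ?_⟩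
  exact hym.trans (((reachableOutside_of_tail hr₁ hm₁m hm₁).symm.trans hreach).mono
    subset_union_left)

end RayEquiv

lemma InEnd.rayEquiv {ω r g : ℕ → V} (hω : IsRay G ω) (hr : InEnd G ω r) (hg : InEnd G ω g) :
    RayEquiv G r g :=
  hr.2.trans hω.2 hg.2.symm

def componentOutside (G : SimpleGraph V) (W : Set V) (y : V) : Set V :=
  {z | ReachableOutside G W y z}

section componentOutside

variable {W : Set V} {y : V}

lemma isSeparation_componentOutside :
    IsSeparation G (componentOutside G W y ∪ W) (componentOutside G W y)ᶜ := by
  refine ⟨eq_univ_of_forall fun z => ?_, ?_⟩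
  · by_cases hz : z ∈ componentOutside G W y
    · exact .inl (.inl hz)
    · exact .inr hz
  · rintro a ⟨-, haK⟩ b ⟨hbK, hbKW⟩ hab
    rw [mem_compl_iff, not_not] at haK
    exact hbK (ReachableOutside.step haK hab fun hb => hbKW (.inr hb))

lemma sepOrder_componentOutside_le :
    SepOrder (componentOutside G W y ∪ W) (componentOutside G W y)ᶜ ≤ W.encard :=
  encard_mono fun _ ⟨hz, hzK⟩ => hz.resolve_left hzK

lemma subset_componentOutside_union {A B : Set V} (hconn : ConnectedIn G (A \ B))
    (hnb : ∀ x ∈ A ∩ B, ∃ u ∈ A \ B, G.Adj x u) (hWB : W ⊆ B) (hy : y ∈ A \ B) :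
    A ⊆ componentOutside G W y ∪ W := by
  have hdiff : A \ B ⊆ componentOutside G W y := fun u hu => by
    obtain ⟨w, hw⟩ := hconn y hy u hu
    exact ⟨w, fun x hx hxW => (hw x hx).2 (hWB hxW)⟩
  intro z hz
  by_cases hzB : z ∈ B
  · by_cases hzW : z ∈ W
    · exact .inr hzW
    · obtain ⟨u, hu, hzu⟩ := hnb z ⟨hz, hzB⟩
      exact .inl (ReachableOutside.step (hdiff hu) hzu.symm hzW)
  · exact .inl (hdiff ⟨hz, hzB⟩)

end componentOutside

section Alpha

variable {ω : ℕ → V} {k : ℕ} {α : Set V → Set V → Ordinal}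

lemma AlphaSpec.le_of_subset (hα : AlphaSpec G ω k α) {A B C D : Set V}
    (hCD : Relevant G ω k C D) (hAB : Relevant G ω k A B) (hAC : A ⊆ C) (hDB : D ⊆ B) :
    α A B ≤ α C D := by
  by_cases heq : (A, B) = (C, D)
  · simp only [Prod.mk.injEq] at heq
    rw [heq.1, heq.2]
  · exact ((hα C D hCD).1 A B hAB hAC hDB heq).le

lemma exists_lt_alpha_of_not_alphaV_le {v : V} {o : Ordinal} (h : ¬ alphaV G ω k α v ≤ o) :
    ∃ A B, Relevant G ω k A B ∧ v ∈ A ∩ B ∧ o < α A B := by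
  by_contra! hle
  exact h (csSup_le' fun _ ⟨A, B, hAB, hv, heq⟩ => heq ▸ hle A B hAB hv)

end Alpha

namespace Relevant

variable {ω : ℕ → V} {k : ℕ} {A B : Set V}

lemma card_le (hAB : Relevant G ω k A B) {F : Finset V} (hF : ↑F ⊆ A ∩ B) : F.card ≤ k := by
  have h : (F.card : ℕ∞) ≤ k :=
    (encard_coe_eq_coe_finsetCard F).symm.trans_le ((encard_mono hF).trans_eq hAB.2.1)
  exact_mod_cast h

lemma exists_frequently_mem_componentOutside (hAB : Relevant G ω k A B) {W : Set V}
    (hWAB : W ⊆ A ∩ B) (hW : W.encard < k) {y : V} (hy : y ∈ A \ B) :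
    ∃ r, InEnd G ω r ∧ ∃ᶠ m in atTop, r m ∈ componentOutside G W y := by
  by_contra! h
  refine hAB.2.2.2.2.2 ⟨_, _, isSeparation_componentOutside,
    sepOrder_componentOutside_le.trans_lt hW,
    subset_componentOutside_union hAB.2.2.1 hAB.2.2.2.1 (fun _ hx => (hWAB hx).2) hy,
    fun r hr => ?_⟩
  exact (h r hr).exists_forall_of_atTop

lemma exists_mem_inter_diff_of_alpha_lt {C D : Set V} (hCD : Relevant G ω k C D)
    {α : Set V → Set V → Ordinal} (hα : AlphaSpec G ω k α) (hAB : Relevant G ω k A B) {v : V}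
    (hv : v ∈ C \ D) (hvAB : v ∈ A ∩ B) (hlt : α C D < α A B) : ∃ y ∈ C ∩ D, y ∈ A \ B := by
  have hmeet : ¬ Disjoint (A \ B) D := fun hdisj => by
    obtain ⟨hAC, hDB⟩ := hAB.1.subset_and_subset_of_disjoint hCD.1 hAB.2.2.2.1 hdisj
    exact (hα.le_of_subset hCD hAB hAC hDB).not_gt hlt
  obtain ⟨a, ha, haD⟩ := not_disjoint_iff.1 hmeet
  obtain ⟨u, hu, hvu⟩ := hAB.2.2.2.1 v hvAB
  obtain ⟨w, hw⟩ := hAB.2.2.1 u hu a ha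
  obtain ⟨x, hx, hxCD⟩ :=
    hCD.1.exists_mem_inter_of_walk w (hCD.1.mem_left_of_adj hv hvu) haD
  exact ⟨x, hxCD, hw x hx⟩

end Relevant

structure SeparationFamily (G : SimpleGraph V) (ω : ℕ → V) (k : ℕ) (D : Set V) (y : V)
    (W : Finset V) (A B : V → Set V) (T : Set V) : Prop where
  relevant : ∀ v ∈ T, Relevant G ω k (A v) (B v)
  mem_inter : ∀ v ∈ T, v ∈ A v ∩ B v
  root_mem : ∀ v ∈ T, y ∈ A v \ B v
  subset_inter : ∀ v ∈ T, ↑W ⊆ A v ∩ B v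
  not_mem : ∀ v ∈ T, v ∉ D

namespace SeparationFamily

variable {ω : ℕ → V} {k : ℕ} {D : Set V} {y : V} {W : Finset V} {A B : V → Set V}
  {T T' : Set V}

lemma mono (h : SeparationFamily G ω k D y W A B T) (hT' : T' ⊆ T) :
    SeparationFamily G ω k D y W A B T' where
  relevant v hv := h.relevant v (hT' hv)
  mem_inter v hv := h.mem_inter v (hT' hv)
  root_mem v hv := h.root_mem v (hT' hv)
  subset_inter v hv := h.subset_inter v (hT' hv)
  not_mem v hv := h.not_mem v (hT' hv)

lemma insert_of_forall_mem [DecidableEq V] (h : SeparationFamily G ω k D y W A B T) {w : V}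
    (hw : ∀ v ∈ T, w ∈ A v ∩ B v) : SeparationFamily G ω k D y (insert w W) A B T :=
  { h with
    subset_inter := fun v hv => by
      rw [Finset.coe_insert, insert_subset_iff]
      exact ⟨hw v hv, h.subset_inter v hv⟩ }

lemma card_lt (h : SeparationFamily G ω k D y W A B T) (hT : T.Infinite) : W.card < k := by
  classical
  obtain ⟨v, hvT, hvW⟩ := (hT.sdiff W.finite_toSet).nonempty
  have hle := (h.relevant v hvT).card_le (F := insert v W) <| by
    rw [Finset.coe_insert, insert_subset_iff]
    exact ⟨h.mem_inter v hvT, h.subset_inter v hvT⟩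
  rwa [Finset.card_insert_of_notMem hvW, Nat.succ_le_iff] at hle

lemma exists_insert [DecidableEq V] (h : SeparationFamily G ω k D y W A B T) (hT : T.Infinite)
    (hω : IsRay G ω) {g : ℕ → V} (hg : InEnd G ω g) {M : ℕ}
    (hM : {v ∈ T | ∀ n, M ≤ n → g n ∈ B v}.Infinite) :
    ∃ w ∉ W, ∃ T' ⊆ T, T'.Infinite ∧ SeparationFamily G ω k D y (insert w W) A B T' := by
  obtain ⟨v₀, hv₀⟩ := hT.nonempty
  have hW : (↑W : Set V).encard < k := by
    rw [encard_coe_eq_coe_finsetCard]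
    exact_mod_cast h.card_lt hT
  obtain ⟨r, hr, hfreq⟩ := (h.relevant v₀ hv₀).exists_frequently_mem_componentOutside
    (h.subset_inter v₀ hv₀) hW (h.root_mem v₀ hv₀)
  obtain ⟨m, hMm, ρ, hρ⟩ := ((hr.rayEquiv hω hg).frequently_reachableOutside hr.1.2
    W.finite_toSet hfreq).forall_exists_of_atTop M
  have hcross : ∀ v ∈ {v ∈ T | ∀ n, M ≤ n → g n ∈ B v}, ∃ x ∈ {x | x ∈ ρ.support},
      x ∈ A v ∩ B v := fun v hv =>
    (h.relevant v hv.1).1.exists_mem_inter_of_walk ρ (h.root_mem v hv.1).1 (hv.2 m hMm)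
  obtain ⟨w, hwρ, hw⟩ := hM.exists_infinite_of_forall_exists ρ.support.finite_toSet hcross
  exact ⟨w, fun hwW => hρ w hwρ hwW, _, fun v hv => hv.1.1, hw,
    (h.mono fun v hv => hv.1.1).insert_of_forall_mem fun v hv => hv.2⟩

lemma exists_infinite_eventually_mem (h : SeparationFamily G ω k D y W A B T) (hT : T.Infinite)
    {f : Fin k → ℕ → V} (hf : ∀ i, InEnd G ω (f i)) (hdisj : DisjointRays f)
    (hD : LiesIn G ω D) : ∃ i M, {v ∈ T | ∀ n, M ≤ n → f i n ∈ B v}.Infinite := by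
  classical
  by_contra! hfin
  obtain ⟨t, ht⟩ :=
    (eventually_all.2 fun i => eventually_atTop.2 (hD (f i) (hf i))).exists_forall_of_atTop
  obtain ⟨v, hvT, hv⟩ := (hT.sdiff (finite_iUnion fun i => hfin i t)).nonempty
  have hrel := h.relevant v hvT
  have hentry : ∀ i, ∃ n, t ≤ n ∧ f i n ∈ A v ∩ B v := fun i => by
    have hleave : ¬ ∀ n, t ≤ n → f i n ∈ B v := fun hB => hv (mem_iUnion.2 ⟨i, hvT, hB⟩)
    push Not at hleave
    obtain ⟨n₀, htn₀, hn₀⟩ := hleave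
    obtain ⟨m, hm⟩ := hrel.2.2.2.2.1 (f i) (hf i)
    obtain ⟨n, hn₀n, hn⟩ := hrel.1.exists_mem_inter_of_adj_seq (hf i).1.2 (le_max_left n₀ m)
      (hrel.1.mem_left hn₀) (hm _ (le_max_right _ _))
    exact ⟨n, htn₀.trans hn₀n, hn⟩
  choose n hn using hentry
  have hinj : Function.Injective fun i => f i (n i) := fun i j hij => by
    by_contra hne
    exact disjoint_left.1 (hdisj hne) ⟨n i, rfl⟩ ⟨n j, hij.symm⟩
  have hv_notMem : v ∉ Finset.univ.image fun i => f i (n i) := by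
    simp only [Finset.mem_image, Finset.mem_univ, true_and, not_exists]
    exact fun i hi => h.not_mem v hvT (hi ▸ ht _ (hn i).1 i)
  -- `v ∉ D` and the `k` entry vertices in `D` give `k + 1` vertices in a separator of order `k`
  have hle := hrel.card_le (F := insert v (Finset.univ.image fun i => f i (n i))) <| by
    rw [Finset.coe_insert, insert_subset_iff, Finset.coe_image, Finset.coe_univ, image_univ]
    exact ⟨h.mem_inter v hvT, range_subset_iff.2 fun i => (hn i).2⟩
  rw [Finset.card_insert_of_notMem hv_notMem, Finset.card_image_of_injective _ hinj,
    Finset.card_univ, Fintype.card_fin] at hle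
  omega

lemma not_infinite (h : SeparationFamily G ω k D y W A B T) (hω : IsRay G ω)
    {f : Fin k → ℕ → V} (hf : ∀ i, InEnd G ω (f i)) (hdisj : DisjointRays f)
    (hD : LiesIn G ω D) : ¬ T.Infinite := by
  classical
  induction hn : k - W.card generalizing W T with
  | zero => exact fun hT => by have := h.card_lt hT; omega
  | succ n ih =>
    intro hT
    obtain ⟨i, M, hM⟩ := h.exists_infinite_eventually_mem hT hf hdisj hD
    obtain ⟨w, hwW, T', -, hT', h'⟩ := h.exists_insert hT hω (hf i) hM
    exact ih h' (by rw [Finset.card_insert_of_notMem hwW]; omega) hT'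

end SeparationFamily

end Graph

theorem alpha_le_for_cofinitely_many_general {V : Type} (G : SimpleGraph V) (ω : ℕ → V) (k : ℕ)
    (hray : IsRay G ω)
    (hdeg : EndVertexDegree G ω k)
    (α : Set V → Set V → Ordinal) (hα : AlphaSpec G ω k α)
    (C D : Set V) (hCD : Relevant G ω k C D) :
    {v : V | v ∈ C ∧ ¬ alphaV G ω k α v ≤ α C D}.Finite := by
  rw [← not_infinite]
  intro hinf
  have hCDfin : (C ∩ D).Finite := finite_of_encard_eq_coe hCD.2.1
  have hroot : ∀ v ∈ {v | v ∈ C ∧ ¬ alphaV G ω k α v ≤ α C D} \ (C ∩ D), ∃ y ∈ C ∩ D,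
      ∃ A B, Relevant G ω k A B ∧ v ∈ A ∩ B ∧ y ∈ A \ B := by
    rintro v ⟨⟨hvC, hvα⟩, hvCD⟩
    obtain ⟨A, B, hAB, hvAB, hlt⟩ := exists_lt_alpha_of_not_alphaV_le hvα
    obtain ⟨y, hy, hyAB⟩ := hCD.exists_mem_inter_diff_of_alpha_lt hα hAB
      ⟨hvC, fun hvD => hvCD ⟨hvC, hvD⟩⟩ hvAB hlt
    exact ⟨y, hy, A, B, hAB, hvAB, hyAB⟩
  choose! root hroot A B hAB using hroot
  obtain ⟨y, -, hT⟩ := (hinf.sdiff hCDfin).exists_infinite_of_forall_exists hCDfin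
    fun v hv => ⟨root v, hroot v hv, rfl⟩
  obtain ⟨f, hf, hdisj⟩ := hdeg.1
  have hfam : SeparationFamily G ω k D y ∅ A B {v ∈ _ | root v = y} :=
    { relevant := fun v hv => (hAB v hv.1).1
      mem_inter := fun v hv => (hAB v hv.1).2.1
      root_mem := fun v hv => hv.2 ▸ (hAB v hv.1).2.2
      subset_inter := by simp
      not_mem := fun v hv hvD => hv.1.2 ⟨hv.1.1.1, hvD⟩ }
  exact hfam.not_infinite hray hf hdisj hCD.2.2.2.2.1 hT

/-- for every ω-relevant separation `(C,D)`, all but finitely many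
vertices `v ∈ C` satisfy `α(v) ≤ α(C,D)`. -/
theorem alpha_le_for_cofinitely_many {V : Type} (G : SimpleGraph V) (ω : ℕ → V) (k : ℕ)
    (hray : IsRay G ω) (hone : ∀ r, IsRay G r → RayEquiv G r ω)
    (hundom : Undominated G ω) (hdeg : EndVertexDegree G ω k)
    (α : Set V → Set V → Ordinal) (hα : AlphaSpec G ω k α)
    (C D : Set V) (hCD : Relevant G ω k C D) :
    {v : V | v ∈ C ∧ ¬ alphaV G ω k α v ≤ α C D}.Finite :=
  alpha_le_for_cofinitely_many_general G ω k hray hdeg α hα C D hCD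

end PaperEnds
end

section
/- If T is a one-ended tree and R is a ray in T, then every automorphism of T fixes some tail of R pointwise. -/
/-!
Two equivalent rays in a forest share a tail. Fix a walk `P` from `r₁ 0` to `r₂ 0`. For `N` beyond
`P`, equivalence gives a walk from some `r₁ m`, `m > N`, to some `r₂ n` avoiding `r₁ N`; since in
a forest a path lies on every walk with the same ends, `r₁ N` lies on `P` or on `r₂`, hence on
`r₂`. Both rays are geodesics, so the matching of indices is a shift. Applied to `R` and `φ ∘ R`
this gives `φ (R (b + t)) = R (a + t)`. If `a ≠ b`, then `φ` or `φ⁻¹` translates a tail of `R`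
forward, and iterating its inverse from the start of that tail traces a second ray meeting `R`
only there; it shares no tail with `R`, contradicting one-endedness.
-/

open Set Cardinal

namespace PaperEnds

open SimpleGraph

variable {V : Type} {G : SimpleGraph V}

theorem _root_.SimpleGraph.Walk.IsPath.support_subset (hG : G.IsAcyclic) {u v : V}
    {p : G.Walk u v} (hp : p.IsPath) (w : G.Walk u v) : p.support ⊆ w.support := by
  classical
  have : p = w.bypass :=
    congrArg Subtype.val ((hG.subsingleton_path u v).elim ⟨p, hp⟩ ⟨_, w.bypass_isPath⟩)
  exact this ▸ w.support_bypass_subset_support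

theorem _root_.SimpleGraph.Walk.IsPath.length_eq_dist (hG : G.IsAcyclic) {u v : V}
    {p : G.Walk u v} (hp : p.IsPath) : p.length = G.dist u v := by
  obtain ⟨q, hq, hlen⟩ := p.reachable.exists_path_of_dist
  have : p = q := congrArg Subtype.val ((hG.subsingleton_path u v).elim ⟨p, hp⟩ ⟨q, hq⟩)
  exact this ▸ hlen

theorem eq_add_of_dist_eq {D : ℕ → ℕ} (h : ∀ i j, Nat.dist (D i) (D j) = Nat.dist i j) (k : ℕ) :
    D k = D 0 + k := by
  have h01 := h 0 1
  have h0k := h 0 k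
  have h1k := h 1 k
  have h0K := h 0 (D 0 + 1)
  have h1K := h 1 (D 0 + 1)
  simp only [Nat.dist] at *
  omega

namespace IsRay

variable {r : ℕ → V}

def walk (hr : IsRay G r) : (n : ℕ) → G.Walk (r 0) (r n)
  | 0 => .nil
  | n + 1 => (hr.walk n).concat (hr.2 n)

theorem length_walk (hr : IsRay G r) (n : ℕ) : (hr.walk n).length = n := by
  induction n with
  | zero => rfl
  | succ n ih => rw [walk, Walk.length_concat, ih]

theorem mem_support_walk (hr : IsRay G r) {n : ℕ} {x : V} :
    x ∈ (hr.walk n).support ↔ ∃ i ≤ n, r i = x := by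
  induction n with
  | zero => simp [walk, eq_comm]
  | succ n ih =>
    simp only [walk, Walk.support_concat, List.mem_append, List.mem_singleton, ih]
    constructor
    · rintro (⟨i, hi, rfl⟩ | rfl)
      exacts [⟨i, by omega, rfl⟩, ⟨n + 1, le_rfl, rfl⟩]
    · rintro ⟨i, hi, rfl⟩
      rcases Nat.lt_or_eq_of_le hi with hi | rfl
      exacts [Or.inl ⟨i, by omega, rfl⟩, Or.inr rfl]

theorem isPath_walk (hr : IsRay G r) (n : ℕ) : (hr.walk n).IsPath := by
  induction n with
  | zero => exact .nil
  | succ n ih =>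
    refine ih.concat ?_ (hr.2 n)
    rw [hr.mem_support_walk]
    rintro ⟨i, hi, heq⟩
    have := hr.1 heq
    omega

theorem tail (hr : IsRay G r) (a : ℕ) : IsRay G (fun t => r (a + t)) :=
  ⟨fun i j h => by simpa using hr.1 h, fun t => hr.2 (a + t)⟩

theorem map {V' : Type} {G' : SimpleGraph V'} (hr : IsRay G r) (f : G ↪g G') :
    IsRay G' (fun n => f (r n)) :=
  ⟨f.injective.comp hr.1, fun n => f.map_adj_iff.2 (hr.2 n)⟩

theorem dist_add (hG : G.IsAcyclic) (hr : IsRay G r) (i k : ℕ) : G.dist (r i) (r (i + k)) = k :=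
  (((hr.tail i).isPath_walk k).length_eq_dist hG).symm.trans ((hr.tail i).length_walk k)

theorem dist_eq (hG : G.IsAcyclic) (hr : IsRay G r) (i j : ℕ) :
    G.dist (r i) (r j) = Nat.dist i j := by
  rcases le_total i j with hij | hij
  · obtain ⟨k, rfl⟩ := Nat.exists_eq_add_of_le hij
    rw [hr.dist_add hG, Nat.dist_eq_sub_of_le hij, Nat.add_sub_cancel_left]
  · obtain ⟨k, rfl⟩ := Nat.exists_eq_add_of_le hij
    rw [G.dist_comm, hr.dist_add hG, Nat.dist_eq_sub_of_le_right hij, Nat.add_sub_cancel_left]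

end IsRay

section EquivalentRays

variable {r₁ r₂ : ℕ → V}

theorem RayEquiv.exists_forall_mem_range (hG : G.IsAcyclic) (h₁ : IsRay G r₁) (h₂ : IsRay G r₂)
    (h : RayEquiv G r₁ r₂) : ∃ N₀, ∀ N, N₀ ≤ N → r₁ N ∈ range r₂ := by
  obtain ⟨m₀, n₀, -, -, w₀, -⟩ := h ∅ finite_empty
  let P : G.Walk (r₁ 0) (r₂ 0) := (h₁.walk m₀).append (w₀.append (h₂.walk n₀).reverse)
  have hrange : ∀ N, r₁ N ∉ P.support → r₁ N ∈ range r₂ := by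
    intro N hN
    obtain ⟨m, n, hm, -, w, hw⟩ := h {r₁ N} (finite_singleton _)
    have hNm : N ≤ m := by
      by_contra hlt
      exact hm N (by omega) rfl
    have hmem : r₁ N ∈ (P.append ((h₂.walk n).append w.reverse)).support :=
      (h₁.isPath_walk m).support_subset hG _ (h₁.mem_support_walk.2 ⟨N, hNm, rfl⟩)
    simp only [Walk.mem_support_append_iff, Walk.support_reverse, List.mem_reverse] at hmem
    rcases hmem with hP | hr₂ | hw'
    · exact absurd hP hN
    · obtain ⟨j, -, hj⟩ := h₂.mem_support_walk.1 hr₂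
      exact ⟨j, hj⟩
    · exact absurd rfl (hw _ hw')
  obtain ⟨B, hB⟩ := ((List.finite_toSet P.support).preimage h₁.1.injOn).bddAbove
  exact ⟨B + 1, fun N hN => hrange N fun hP => by have := hB hP; omega⟩

theorem RayEquiv.exists_tail_eq (hG : G.IsAcyclic) (h₁ : IsRay G r₁) (h₂ : IsRay G r₂)
    (h : RayEquiv G r₁ r₂) : ∃ a b, ∀ t, r₁ (a + t) = r₂ (b + t) := by
  obtain ⟨N₀, hN₀⟩ := h.exists_forall_mem_range hG h₁ h₂
  choose D hD using fun k => hN₀ (N₀ + k) (Nat.le_add_right _ _)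
  have hD_dist : ∀ i j, Nat.dist (D i) (D j) = Nat.dist i j := fun i j => by
    rw [← h₂.dist_eq hG, hD, hD, h₁.dist_eq hG, Nat.dist_add_add_left]
  refine ⟨N₀, D 0, fun t => ?_⟩
  rw [← hD, eq_add_of_dist_eq hD_dist t]

end EquivalentRays

section Translation

variable {ψ : G ≃g G} {R : ℕ → V} {e : ℕ}

theorem pow_apply_of_forall_apply_eq_add (hψ : ∀ t, ψ (R t) = R (t + (e + 1))) (n t : ℕ) :
    (ψ ^ n) (R t) = R (t + n * (e + 1)) := by
  induction n generalizing t with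
  | zero => rw [pow_zero, zero_mul, add_zero, RelIso.one_apply]
  | succ n ih =>
    rw [pow_succ', RelIso.mul_apply, ih, hψ]
    congr 1
    ring

/-- When `ψ` shifts `R` by `e + 1`, `R` extends to a double ray `L` with
`L (k - n * (e + 1)) = ψ⁻¹ ^ n (R k)`; this is its other half `j ↦ L (-j)`, as
`-j = j * e - j * (e + 1)`. -/
def backwardRay (ψ : G ≃g G) (R : ℕ → V) (e j : ℕ) : V := (ψ ^ j).symm (R (j * e))

theorem pow_apply_backwardRay (j : ℕ) : (ψ ^ j) (backwardRay ψ R e j) = R (j * e) :=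
  RelIso.apply_symm_apply _ _

theorem pow_add_apply_backwardRay (hψ : ∀ t, ψ (R t) = R (t + (e + 1))) (i j : ℕ) :
    (ψ ^ (i + j)) (backwardRay ψ R e i) = R (i * e + j * (e + 1)) := by
  rw [add_comm i j, pow_add, RelIso.mul_apply, pow_apply_backwardRay,
    pow_apply_of_forall_apply_eq_add hψ]

theorem isRay_backwardRay (hR : IsRay G R) (hψ : ∀ t, ψ (R t) = R (t + (e + 1))) :
    IsRay G (backwardRay ψ R e) := by
  constructor
  · intro i j hij
    have := congrArg (ψ ^ (i + j)) hij
    rw [pow_add_apply_backwardRay hψ, add_comm i j, pow_add_apply_backwardRay hψ] at this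
    have := hR.1 this
    linarith
  · intro j
    rw [← (ψ ^ (j + 1)).map_adj_iff, pow_add_apply_backwardRay hψ, pow_apply_backwardRay]
    convert (hR.2 ((j + 1) * e)).symm using 2
    ring

theorem eq_zero_of_backwardRay_eq (hR : IsRay G R) (hψ : ∀ t, ψ (R t) = R (t + (e + 1)))
    {j k : ℕ} (h : backwardRay ψ R e j = R k) : j = 0 := by
  have := congrArg (ψ ^ j) h
  rw [pow_apply_backwardRay, pow_apply_of_forall_apply_eq_add hψ] at this
  have := hR.1 this
  linarith

end Translation

theorem OneEnded.le_of_forall_apply_eq (hG : G.IsAcyclic) (hone : OneEnded G) {R : ℕ → V}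
    (hR : IsRay G R) (ψ : G ≃g G) {b c : ℕ} (h : ∀ t, ψ (R (b + t)) = R (c + t)) : c ≤ b := by
  by_contra! hbc
  obtain ⟨e, rfl⟩ : ∃ e, c = b + (e + 1) := ⟨c - b - 1, by omega⟩
  have hψ : ∀ t, ψ (R (b + t)) = R (b + (t + (e + 1))) := fun t => by
    rw [h]
    congr 1
    ring
  have hQ := isRay_backwardRay (hR.tail b) hψ
  obtain ⟨N₀, hN₀⟩ := (hone.2 _ _ hQ (hR.tail b)).exists_forall_mem_range hG hQ (hR.tail b)
  obtain ⟨k, hk⟩ := hN₀ (N₀ + 1) (by omega)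
  have := eq_zero_of_backwardRay_eq (hR.tail b) hψ hk.symm
  omega

/-- every automorphism of a one-ended tree fixes a tail of every ray
pointwise. -/
theorem tree_automorphism_fixes_tail {τ : Type} (T : SimpleGraph τ)
    (htree : T.IsTree) (hone : OneEnded T)
    (R : ℕ → τ) (hR : IsRay T R) (φ : T ≃g T) :
    ∃ m : ℕ, ∀ n, m ≤ n → φ (R n) = R n := by
  have hφR : IsRay T (fun n => φ (R n)) := hR.map φ.toEmbedding
  obtain ⟨a, b, hab⟩ := (hone.2 R _ hR hφR).exists_tail_eq htree.isAcyclic hR hφR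
  have hab_le : a ≤ b := hone.le_of_forall_apply_eq htree.isAcyclic hR φ fun t => (hab t).symm
  have hba_le : b ≤ a := hone.le_of_forall_apply_eq htree.isAcyclic hR φ.symm fun t => by
    rw [hab t, RelIso.symm_apply_apply]
  obtain rfl := le_antisymm hab_le hba_le
  refine ⟨a, fun n hn => ?_⟩
  obtain ⟨t, rfl⟩ := Nat.exists_eq_add_of_le hn
  exact (hab t).symm

end PaperEnds
end
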